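/- Let Σ be an embedded J-holomorphic curve in S⁶ with local oriented orthonormal frame {f₁, f₂ = jf₁}. Then the Dirac operator 𝐃_Σ = Σᵢ fᵢ × ∇̃^⊥_{fᵢ} satisfies 𝐃_Σ = Σᵢ fᵢ × ∇^⊥_{fᵢ} − J, and the J-antilinear bundle map γ_Σ yields γ_Σ ∘ ∂̄^N_∇ = 𝐃_Σ + 2J. In particular γ_Σ((∇^⊥J)J) = −2J. -/

import Mathlib

open scoped RealInnerProductSpace

noncomputable section

/-- ℝ⁷ with its Euclidean inner product. -/
abbrev E7 : Type := EuclideanSpace ℝ (Fin 7)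

/-- (e^i ∧ e^j ∧ e^k)(x, y, z). -/
def tripleDet (i j k : Fin 7) (x y z : E7) : ℝ :=
  Matrix.det !![x i, y i, z i; x j, y j, z j; x k, y k, z k]

/-- The standard G₂ 3-form
φₑ = e^{123} − e^{145} − e^{167} − e^{246} − e^{275} − e^{347} − e^{356}
(indices shifted to start from 0). -/
def phiE (x y z : E7) : ℝ :=
  tripleDet 0 1 2 x y z - tripleDet 0 3 4 x y z - tripleDet 0 5 6 x y z -
    tripleDet 1 3 5 x y z - tripleDet 1 6 4 x y z - tripleDet 2 3 6 x y z -
    tripleDet 2 4 5 x y z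

/-- The octonionic cross product on ℝ⁷ = Im 𝕆, characterized by ⟨u × v, w⟩ = φₑ(u,v,w). -/
def cross7 (u v : E7) : E7 :=
  (EuclideanSpace.equiv (Fin 7) ℝ).symm fun k => phiE u v (EuclideanSpace.single k 1)

/-- Tangential projection onto T_x S⁶ (for ‖x‖ = 1): w ↦ w − ⟨x,w⟩x. -/
def tproj (x w : E7) : E7 := w - ⟪x, w⟫ • x

/-- Chart domain for a local parametrization of a surface Σ ⊂ S⁶. -/
abbrev Pt : Type := ℝ × ℝ

/-- The standard complex structure j₀ of the chart ℝ². -/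
def j0 (c : Pt) : Pt := (-c.2, c.1)

/-- The span of the position vector and the tangent plane of the parametrized surface
F : ℝ² → Σ ⊂ S⁶ at F(p). -/
def TanSpan (F : Pt → E7) (p : Pt) : Submodule ℝ E7 :=
  Submodule.span ℝ {F p, fderiv ℝ F p (1, 0), fderiv ℝ F p (0, 1)}

/-- The normal space N_{F(p)}Σ of Σ in S⁶. -/
def Nsp (F : Pt → E7) (p : Pt) : Submodule ℝ E7 := (TanSpan F p)ᗮ

/-- Orthogonal projection onto the normal space of Σ in S⁶. -/
def PN (F : Pt → E7) (p : Pt) (w : E7) : E7 := (Submodule.orthogonalProjection (Nsp F p) w : E7)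

/-- The normal connection ∇^⊥ (induced by the Levi–Civita connection of the round S⁶) on normal
vector fields ξ along Σ, in the chart direction c. -/
def covN (F ξ : Pt → E7) (p : Pt) (c : Pt) : E7 := PN F p (fderiv ℝ ξ p c)

/-- The normal part ∇̃^⊥ of the characteristic SU(3) connection
∇̃_u ξ = ∇_u ξ + ½ (∇_u J)(Jξ), in the chart direction c;
here (∇_u J)v = u ×_{S⁶} v on S⁶. -/
def covT (F ξ : Pt → E7) (p : Pt) (c : Pt) : E7 :=
  PN F p (fderiv ℝ ξ p c + (2 : ℝ)⁻¹ • cross7 (fderiv ℝ F p c) (cross7 (F p) (ξ p)))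

/-- The normal Cauchy–Riemann operator
∂̄^N_∇ ξ = ½(∇^⊥ξ + J∘(∇^⊥ξ)∘j + ∇^⊥_ξ J ∘ j), as a 1-form in the chart direction c. -/
def dbarN (F ξ : Pt → E7) (p : Pt) (c : Pt) : E7 :=
  (2 : ℝ)⁻¹ • (covN F ξ p c + cross7 (F p) (covN F ξ p (j0 c)) +
    PN F p (tproj (F p) (cross7 (ξ p) (fderiv ℝ F p (j0 c)))))

/-- The 1-form ((∇^⊥J)(Jξ))(c) = ∇^⊥_c(Jξ) − J ∇^⊥_c ξ. -/
def nablaPerpJJ (F ξ : Pt → E7) (p : Pt) (c : Pt) : E7 :=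
  covN F (fun q => cross7 (F q) (cross7 (F q) (ξ q))) p c -
    cross7 (F p) (covN F (fun q => cross7 (F q) (ξ q)) p c)

/-- The Dirac operator 𝐃_Σ = Σᵢ fᵢ × ∇̃^⊥_{fᵢ}, in a chart which is orthonormal at the point p
(f₁ = dF(e₁), f₂ = dF(e₂) = j f₁). -/
def DSig (F ξ : Pt → E7) (p : Pt) : E7 :=
  cross7 (fderiv ℝ F p (1, 0)) (covT F ξ p (1, 0)) +
    cross7 (fderiv ℝ F p (0, 1)) (covT F ξ p (0, 1))


/-! The span `T` of `F p`, `f₁` and `f₂ = F p × f₁` is closed under the cross product (it is the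
imaginary part of a quaternion subalgebra of `𝕆`), so `Nsp F p = Tᗮ` is stable under crossing with
`T`, and the normal projection commutes with `J = F p × ·`. For `u, v ∈ T` orthogonal and `ν ⟂ T`
the associator identity collapses to `u × (v × ν) = -(u × v) × ν`. This turns each zeroth-order
term `(∇_c J)(J ξ)` into `df(j c) × ξ`, and with `f₁ × f₂ = F p` the three formulas become linear
identities. For `(∇^⊥J)J` one uses that `J (J ξ) = -ξ` holds identically along `Σ`, so only
`J ξ` has to be differentiated. -/

open Submodule

lemma cross7_eq (u v : E7) : cross7 u v = !₂[
    u 1 * v 2 - u 2 * v 1 - (u 3 * v 4 - u 4 * v 3) - (u 5 * v 6 - u 6 * v 5),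
    -(u 0 * v 2 - u 2 * v 0) - (u 3 * v 5 - u 5 * v 3) - (u 6 * v 4 - u 4 * v 6),
    u 0 * v 1 - u 1 * v 0 - (u 3 * v 6 - u 6 * v 3) - (u 4 * v 5 - u 5 * v 4),
    u 0 * v 4 - u 4 * v 0 + (u 1 * v 5 - u 5 * v 1) + (u 2 * v 6 - u 6 * v 2),
    -(u 0 * v 3 - u 3 * v 0) - (u 1 * v 6 - u 6 * v 1) + (u 2 * v 5 - u 5 * v 2),
    u 0 * v 6 - u 6 * v 0 - (u 1 * v 3 - u 3 * v 1) - (u 2 * v 4 - u 4 * v 2),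
    -(u 0 * v 5 - u 5 * v 0) + (u 1 * v 4 - u 4 * v 1) - (u 2 * v 3 - u 3 * v 2)] := by
  ext k
  fin_cases k <;> simp [cross7, phiE, tripleDet, Matrix.det_fin_three] <;> ring

lemma inner_E7_eq_sum (x y : E7) : ⟪x, y⟫ = ∑ i, x i * y i := by
  simp [PiLp.inner_apply, mul_comm]

lemma isBilinearMap_cross7 : IsBilinearMap ℝ cross7 where
  add_left u u' v := by ext k; fin_cases k <;> simp [cross7_eq] <;> ring
  smul_left s u v := by ext k; fin_cases k <;> simp [cross7_eq] <;> ring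
  add_right u v v' := by ext k; fin_cases k <;> simp [cross7_eq] <;> ring
  smul_right s u v := by ext k; fin_cases k <;> simp [cross7_eq] <;> ring

section Bilinear

variable (u v w : E7) (s : ℝ)

@[simp] lemma cross7_add_right : cross7 u (v + w) = cross7 u v + cross7 u w :=
  isBilinearMap_cross7.add_right u v w

@[simp] lemma cross7_smul_right : cross7 u (s • v) = s • cross7 u v :=
  isBilinearMap_cross7.smul_right s u v

@[simp] lemma cross7_neg_right : cross7 u (-v) = -cross7 u v :=
  map_neg (isBilinearMap_cross7.toLinearMap u) v

@[simp] lemma cross7_sub_right : cross7 u (v - w) = cross7 u v - cross7 u w :=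
  map_sub (isBilinearMap_cross7.toLinearMap u) v w

@[simp] lemma cross7_smul_left : cross7 (s • u) v = s • cross7 u v :=
  isBilinearMap_cross7.smul_left s u v

@[simp] lemma cross7_neg_left : cross7 (-u) v = -cross7 u v :=
  LinearMap.map_neg₂ isBilinearMap_cross7.toLinearMap u v

@[simp] lemma cross7_zero_left : cross7 0 v = 0 :=
  LinearMap.map_zero₂ isBilinearMap_cross7.toLinearMap v

end Bilinear

lemma cross7_anticomm (u v : E7) : cross7 u v = -cross7 v u := by
  ext k; fin_cases k <;> simp [cross7_eq] <;> ring

@[simp] lemma cross7_self (u : E7) : cross7 u u = 0 := by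
  ext k; fin_cases k <;> simp [cross7_eq] <;> ring

lemma inner_cross7_left (u v w : E7) : ⟪cross7 u v, w⟫ = -⟪v, cross7 u w⟫ := by
  simp [cross7_eq, inner_E7_eq_sum, Fin.sum_univ_seven]; ring

@[simp] lemma inner_self_cross7 (u v : E7) : ⟪u, cross7 u v⟫ = 0 := by
  rw [real_inner_comm, inner_cross7_left, cross7_self, inner_zero_right, neg_zero]

@[simp] lemma inner_cross7_self (u v : E7) : ⟪v, cross7 u v⟫ = 0 := by
  rw [cross7_anticomm, inner_neg_right, inner_self_cross7, neg_zero]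

lemma cross7_cross7_add_cross7_cross7 (u v w : E7) :
    cross7 u (cross7 v w) + cross7 (cross7 u v) w =
      (2 * ⟪u, w⟫) • v - ⟪v, w⟫ • u - ⟪u, v⟫ • w := by
  ext k; fin_cases k <;> simp [cross7_eq, inner_E7_eq_sum, Fin.sum_univ_seven] <;> ring

lemma cross7_cross7_self (u v : E7) : cross7 u (cross7 u v) = ⟪u, v⟫ • u - ⟪u, u⟫ • v := by
  have h := cross7_cross7_add_cross7_cross7 u u v
  rw [cross7_self, cross7_zero_left, add_zero] at h
  rw [h]; module

lemma cross7_cross7_eq_neg {u v : E7} (hu : ⟪u, u⟫ = 1) (huv : ⟪u, v⟫ = 0) :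
    cross7 u (cross7 u v) = -v := by
  rw [cross7_cross7_self, hu, huv]; simp

lemma cross7_cross7_of_inner_eq_zero {u v w : E7} (huv : ⟪u, v⟫ = 0) (huw : ⟪u, w⟫ = 0)
    (hvw : ⟪v, w⟫ = 0) : cross7 u (cross7 v w) = -cross7 (cross7 u v) w := by
  refine eq_neg_of_add_eq_zero_left ?_
  rw [cross7_cross7_add_cross7_cross7, huv, huw, hvw]
  simp

lemma fderiv_cross7_apply {G : Type*} [NormedAddCommGroup G] [NormedSpace ℝ G] {f g : G → E7}
    {x : G} (hf : DifferentiableAt ℝ f x) (hg : DifferentiableAt ℝ g x) (c : G) :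
    fderiv ℝ (fun y => cross7 (f y) (g y)) x c =
      cross7 (fderiv ℝ f x c) (g x) + cross7 (f x) (fderiv ℝ g x c) := by
  have h := isBilinearMap_cross7.toContinuousBilinearMap.fderiv_of_bilinear hf hg
  simp only [IsBilinearMap.toContinuousBilinearMap_apply] at h
  simp [h, add_comm]

def CrossClosed (T : Submodule ℝ E7) : Prop :=
  ∀ t ∈ T, ∀ s ∈ T, cross7 t s ∈ T

section CrossClosed

variable {T : Submodule ℝ E7} {t ν : E7}

lemma cross7_mem_orthogonal (hT : CrossClosed T) (ht : t ∈ T) (hν : ν ∈ Tᗮ) :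
    cross7 t ν ∈ Tᗮ := by
  refine (mem_orthogonal _ _).2 fun s hs => ?_
  rw [← neg_eq_zero, ← inner_cross7_left]
  exact inner_right_of_mem_orthogonal (hT t ht s hs) hν

lemma starProjection_orthogonal_cross7 (hT : CrossClosed T) (ht : t ∈ T) (w : E7) :
    Tᗮ.starProjection (cross7 t w) = cross7 t (Tᗮ.starProjection w) := by
  have hw : w - Tᗮ.starProjection w ∈ T := by
    simpa only [orthogonal_orthogonal] using sub_starProjection_mem_orthogonal (K := Tᗮ) w
  refine eq_starProjection_of_mem_orthogonal'
    (cross7_mem_orthogonal hT ht (starProjection_apply_mem _ w))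
    (le_orthogonal_orthogonal T (hT t ht _ hw)) ?_
  rw [← cross7_add_right, add_sub_cancel]

lemma cross7_cross7_of_mem_orthogonal {s : E7} (ht : t ∈ T) (hs : s ∈ T) (hts : ⟪t, s⟫ = 0)
    (hν : ν ∈ Tᗮ) : cross7 t (cross7 s ν) = -cross7 (cross7 t s) ν :=
  cross7_cross7_of_inner_eq_zero hts (inner_right_of_mem_orthogonal ht hν)
    (inner_right_of_mem_orthogonal hs hν)

end CrossClosed

lemma crossClosed_span_cross7 (n a : E7) : CrossClosed (span ℝ {n, a, cross7 n a}) := by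
  set S := span ℝ {n, a, cross7 n a}
  have hn : n ∈ S := subset_span (by simp)
  have ha : a ∈ S := subset_span (by simp)
  have hb : cross7 n a ∈ S := subset_span (by simp)
  have hnb : cross7 n (cross7 n a) ∈ S := by
    rw [cross7_cross7_self]; exact sub_mem (smul_mem _ _ hn) (smul_mem _ _ ha)
  have hab : cross7 a (cross7 n a) ∈ S := by
    rw [cross7_anticomm n a, cross7_neg_right, cross7_cross7_self]
    exact neg_mem (sub_mem (smul_mem _ _ ha) (smul_mem _ _ hn))
  intro t ht s hs
  have hts := apply_mem_map₂ isBilinearMap_cross7.toLinearMap ht hs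
  rw [map₂_span_span] at hts
  refine span_le.2 ?_ hts
  rintro _ ⟨x, hx, y, hy, rfl⟩
  change cross7 x y ∈ S
  clear hts
  simp only [Set.mem_insert_iff, Set.mem_singleton_iff] at hx hy
  rcases hx with rfl | rfl | rfl <;> rcases hy with rfl | rfl | rfl <;>
    first
      | assumption
      | (rw [cross7_self]; exact zero_mem S)
      | (rw [cross7_anticomm]; exact neg_mem (by assumption))

def IsJHolomorphicAt (F : Pt → E7) (p : Pt) : Prop :=
  ∀ c, fderiv ℝ F p (j0 c) = cross7 (F p) (fderiv ℝ F p c)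

lemma j0_one_zero : j0 (1, 0) = (0, 1) := by simp [j0]

lemma j0_zero_one : j0 (0, 1) = -(1, 0) := by simp [j0]

lemma j0_j0 (c : Pt) : j0 (j0 c) = -c := by ext <;> simp [j0]

section Chart

variable {F ξ : Pt → E7} {p : Pt}

lemma PN_apply (w : E7) : PN F p w = (Nsp F p).starProjection w := rfl

lemma PN_of_mem {ν : E7} (hν : ν ∈ Nsp F p) : PN F p ν = ν :=
  starProjection_eq_self_iff.2 hν

lemma covN_mem (c : Pt) : covN F ξ p c ∈ Nsp F p :=
  starProjection_apply_mem _ _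

lemma covN_neg (c : Pt) : covN F ξ p (-c) = -covN F ξ p c := by
  rw [covN, map_neg, PN_apply, map_neg]; rfl

lemma self_mem_tanSpan : F p ∈ TanSpan F p :=
  subset_span (by simp)

lemma fderiv_mem_tanSpan (c : Pt) : fderiv ℝ F p c ∈ TanSpan F p := by
  have hc : c = c.1 • ((1 : ℝ), (0 : ℝ)) + c.2 • ((0 : ℝ), (1 : ℝ)) := by ext <;> simp
  rw [hc, map_add, map_smul, map_smul]
  exact add_mem (smul_mem _ _ (subset_span (by simp))) (smul_mem _ _ (subset_span (by simp)))

lemma PN_self : PN F p (F p) = 0 := by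
  rw [PN_apply, starProjection_apply_eq_zero_iff, Nsp, orthogonal_orthogonal]
  exact self_mem_tanSpan

lemma crossClosed_tanSpan (hholo : IsJHolomorphicAt F p) : CrossClosed (TanSpan F p) := by
  have h := crossClosed_span_cross7 (F p) (fderiv ℝ F p (1, 0))
  rwa [← hholo, j0_one_zero] at h

lemma inner_self_fderiv (hholo : IsJHolomorphicAt F p) (c : Pt) :
    ⟪F p, fderiv ℝ F p c⟫ = 0 := by
  have h := hholo (j0 c)
  rw [j0_j0, map_neg, neg_eq_iff_eq_neg] at h
  rw [h, inner_neg_right, inner_self_cross7, neg_zero]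

lemma cross7_fderiv_cross7_self (hholo : IsJHolomorphicAt F p) (c : Pt) {ν : E7}
    (hν : ν ∈ Nsp F p) :
    cross7 (fderiv ℝ F p c) (cross7 (F p) ν) = cross7 (fderiv ℝ F p (j0 c)) ν := by
  rw [cross7_cross7_of_mem_orthogonal (fderiv_mem_tanSpan c) self_mem_tanSpan
    (by rw [real_inner_comm, inner_self_fderiv hholo]) hν, cross7_anticomm (fderiv ℝ F p c),
    cross7_neg_left, neg_neg, hholo]

lemma cross7_fderiv_fderiv_j0 (hholo : IsJHolomorphicAt F p) (c : Pt) :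
    cross7 (fderiv ℝ F p c) (fderiv ℝ F p (j0 c)) =
      ⟪fderiv ℝ F p c, fderiv ℝ F p c⟫ • F p := by
  rw [hholo, cross7_anticomm (F p), cross7_neg_right, cross7_cross7_self, real_inner_comm,
    inner_self_fderiv hholo]
  simp

lemma cross7_fderiv_cross7_sub_cross7_fderiv_cross7 (hholo : IsJHolomorphicAt F p) (c : Pt)
    {ν : E7} (hν : ν ∈ Nsp F p) :
    cross7 (fderiv ℝ F p c) (cross7 (fderiv ℝ F p (j0 c)) ν) -
        cross7 (fderiv ℝ F p (j0 c)) (cross7 (fderiv ℝ F p c) ν) =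
      -((2 * ⟪fderiv ℝ F p c, fderiv ℝ F p c⟫) • cross7 (F p) ν) := by
  have horth : ⟪fderiv ℝ F p c, fderiv ℝ F p (j0 c)⟫ = 0 := by
    rw [hholo, inner_cross7_self]
  rw [cross7_cross7_of_mem_orthogonal (fderiv_mem_tanSpan _) (fderiv_mem_tanSpan _) horth hν,
    cross7_cross7_of_mem_orthogonal (fderiv_mem_tanSpan _) (fderiv_mem_tanSpan _)
      (by rw [real_inner_comm, horth]) hν,
    cross7_anticomm (fderiv ℝ F p (j0 c)), cross7_fderiv_fderiv_j0 hholo]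
  simp only [cross7_neg_left, neg_neg, cross7_smul_left]
  module

lemma cross7_mem_Nsp (hholo : IsJHolomorphicAt F p) {t ν : E7} (ht : t ∈ TanSpan F p)
    (hν : ν ∈ Nsp F p) : cross7 t ν ∈ Nsp F p :=
  cross7_mem_orthogonal (crossClosed_tanSpan hholo) ht hν

lemma PN_self_cross7 (hholo : IsJHolomorphicAt F p) (w : E7) :
    PN F p (cross7 (F p) w) = cross7 (F p) (PN F p w) :=
  starProjection_orthogonal_cross7 (crossClosed_tanSpan hholo) self_mem_tanSpan w

lemma covT_eq (hholo : IsJHolomorphicAt F p) (hx : ξ p ∈ Nsp F p) (c : Pt) :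
    covT F ξ p c = covN F ξ p c + (2 : ℝ)⁻¹ • cross7 (fderiv ℝ F p (j0 c)) (ξ p) := by
  rw [covT, covN, PN_apply, map_add, map_smul, ← PN_apply, ← PN_apply,
    cross7_fderiv_cross7_self hholo c hx,
    PN_of_mem (cross7_mem_Nsp hholo (fderiv_mem_tanSpan _) hx)]

lemma dbarN_eq (hholo : IsJHolomorphicAt F p) (hx : ξ p ∈ Nsp F p) (c : Pt) :
    dbarN F ξ p c = (2 : ℝ)⁻¹ • (covN F ξ p c + cross7 (F p) (covN F ξ p (j0 c)) -
      cross7 (fderiv ℝ F p (j0 c)) (ξ p)) := by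
  rw [dbarN, tproj, cross7_anticomm (ξ p), PN_apply, map_sub, map_smul, map_neg, ← PN_apply,
    ← PN_apply, PN_self, PN_of_mem (cross7_mem_Nsp hholo (fderiv_mem_tanSpan _) hx)]
  module

lemma nablaPerpJJ_eq (hF : DifferentiableAt ℝ F p) (hξ : DifferentiableAt ℝ ξ p)
    (hunit : ∀ q, ‖F q‖ = 1) (hnorm : ∀ q, ξ q ∈ Nsp F q) (hholo : IsJHolomorphicAt F p)
    (c : Pt) : nablaPerpJJ F ξ p c = cross7 (fderiv ℝ F p (j0 c)) (ξ p) := by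
  have hunit' : ∀ q, ⟪F q, F q⟫ = 1 := fun q => by simp [hunit q]
  have hJJ : (fun q => cross7 (F q) (cross7 (F q) (ξ q))) = fun q => -ξ q :=
    funext fun q => cross7_cross7_eq_neg (hunit' q)
      (inner_right_of_mem_orthogonal self_mem_tanSpan (hnorm q))
  have hJ : covN F (fun q => cross7 (F q) (ξ q)) p c =
      cross7 (fderiv ℝ F p c) (ξ p) + cross7 (F p) (covN F ξ p c) := by
    rw [covN, fderiv_cross7_apply hF hξ, PN_apply, map_add, ← PN_apply, ← PN_apply,
      PN_of_mem (cross7_mem_Nsp hholo (fderiv_mem_tanSpan c) (hnorm p)), PN_self_cross7 hholo]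
    rfl
  have hJdF : cross7 (F p) (cross7 (fderiv ℝ F p c) (ξ p)) =
      -cross7 (fderiv ℝ F p (j0 c)) (ξ p) := by
    rw [cross7_cross7_of_mem_orthogonal self_mem_tanSpan (fderiv_mem_tanSpan c)
      (inner_self_fderiv hholo c) (hnorm p), hholo]
  rw [nablaPerpJJ, hJJ, hJ, covN, fderiv_fun_neg, neg_apply, PN_apply, map_neg,
    ← PN_apply, ← covN, cross7_add_right, hJdF, cross7_cross7_eq_neg (hunit' p)
      (inner_right_of_mem_orthogonal self_mem_tanSpan (covN_mem c))]
  abel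

end Chart

/-- Let Σ be an embedded J-holomorphic curve in S⁶ with local oriented orthonormal frame
{f₁, f₂ = jf₁} at p.  Then the Dirac operator 𝐃_Σ = Σᵢ fᵢ × ∇̃^⊥_{fᵢ} satisfies
𝐃_Σ = Σᵢ fᵢ × ∇^⊥_{fᵢ} − J, the J-antilinear bundle map γ_Σ yields
γ_Σ ∘ ∂̄^N_∇ = 𝐃_Σ + 2J (where γ_Σ(α) = Σᵢ fᵢ × α(fᵢ)), and γ_Σ((∇^⊥J)J) = −2J. -/
theorem statement6 (F ξ : Pt → E7)
    (hF : ContDiff ℝ (⊤ : ℕ∞) F) (hξ : ContDiff ℝ (⊤ : ℕ∞) ξ)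
    (hunit : ∀ p, ‖F p‖ = 1)
    (hholo : ∀ p c, fderiv ℝ F p (j0 c) = cross7 (F p) (fderiv ℝ F p c))
    (hnorm : ∀ p, ξ p ∈ Nsp F p)
    (p : Pt) (hframe : ‖fderiv ℝ F p (1, 0)‖ = 1) :
    DSig F ξ p =
        cross7 (fderiv ℝ F p (1, 0)) (covN F ξ p (1, 0)) +
          cross7 (fderiv ℝ F p (0, 1)) (covN F ξ p (0, 1)) - cross7 (F p) (ξ p) ∧
      cross7 (fderiv ℝ F p (1, 0)) (dbarN F ξ p (1, 0)) +
          cross7 (fderiv ℝ F p (0, 1)) (dbarN F ξ p (0, 1))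
        = DSig F ξ p + (2 : ℝ) • cross7 (F p) (ξ p) ∧
      cross7 (fderiv ℝ F p (1, 0)) (nablaPerpJJ F ξ p (1, 0)) +
          cross7 (fderiv ℝ F p (0, 1)) (nablaPerpJJ F ξ p (0, 1))
        = -((2 : ℝ) • cross7 (F p) (ξ p)) := by
  have hFp : DifferentiableAt ℝ F p := (hF.differentiable (by simp)).differentiableAt
  have hξp : DifferentiableAt ℝ ξ p := (hξ.differentiable (by simp)).differentiableAt
  have hcomm := cross7_fderiv_cross7_sub_cross7_fderiv_cross7 (hholo p) (1, 0) (hnorm p)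
  have hV := cross7_fderiv_cross7_self (hholo p) (1, 0) (covN_mem (ξ := ξ) (0, 1))
  have hU := cross7_fderiv_cross7_self (hholo p) (0, 1) (covN_mem (ξ := ξ) (1, 0))
  simp only [DSig, covT_eq (hholo p) (hnorm p), dbarN_eq (hholo p) (hnorm p),
    nablaPerpJJ_eq hFp hξp hunit hnorm (hholo p)]
  simp only [j0_one_zero, j0_zero_one, map_neg, covN_neg, real_inner_self_eq_norm_sq, hframe,
    cross7_add_right, cross7_sub_right, cross7_smul_right, cross7_neg_right, cross7_neg_left]
    at hcomm hV hU ⊢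
  refine ⟨?_, ?_, ?_⟩
  · linear_combination (norm := module) (2 : ℝ)⁻¹ • hcomm
  · linear_combination (norm := module) (2 : ℝ)⁻¹ • hV - (2 : ℝ)⁻¹ • hU - hcomm
  · linear_combination (norm := module) hcomm
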